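/- arXiv:2405.05779 — 2 statements merged into one kernel-verified Lean document; each statement's English description precedes it below -/
import Mathlib

section
/- If I is a linear order and for each i ∈ I, L_i and L'_i are linear orders with L_i ≡_k L'_i (i.e., they satisfy the same first-order sentences in the language {<} of quantifier rank at most k), then the ordered sums ∑_{i∈I} L_i and ∑_{i∈I} L'_i satisfy ∑_{i∈I} L_i ≡_k ∑_{i∈I} L'_i. -/
open FirstOrder Language Ordinal

attribute [local instance] FirstOrder.Language.orderStructure

/-- Quantifier rank of a bounded formula. -/
def qr {α : Type*} : ∀ {n : ℕ}, Language.order.BoundedFormula α n → ℕ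
  | _, .falsum => 0
  | _, .equal _ _ => 0
  | _, .rel _ _ => 0
  | _, .imp f g => max (qr f) (qr g)
  | _, .all f => qr f + 1

/-- `M ≡ₖ N` : the linear orders `M` and `N` satisfy the same
first-order sentences of the language of orders of quantifier rank `≤ k`. -/
def EqRk (k : ℕ) (M : Type*) (N : Type*) [LinearOrder M] [LinearOrder N] : Prop :=
  ∀ φ : Language.order.Sentence, qr φ ≤ k → (M ⊨ φ ↔ N ⊨ φ)

/-!
By the Ehrenfeucht–Fraïssé theorem, `L ≡ₖ L'` holds exactly when Duplicator wins the `k`-round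
game on `L` and `L'`: a winning position satisfies the same formulas of rank `≤ k` (induction on
formulas), and conversely the Hintikka formula of the rank-`k` type of a position, a single
formula of rank `≤ k` because there are only finitely many such types, forces a winning position.
On the ordered sums Duplicator answers a move in the summand `L i` inside the summand `L' i`,
following the winning strategy for `L i` and `L' i`; the order between points of different
summands only depends on their indices.
-/

theorem Sigma.Lex.toLex_mk_le_toLex_mk {ι : Type*} [LT ι] {α : ι → Type*} [∀ i, LE (α i)]
    {i j : ι} {a : α i} {b : α j} :
    (toLex ⟨i, a⟩ : Σₗ i, α i) ≤ toLex ⟨j, b⟩ ↔ i < j ∨ ∃ h : i = j, h ▸ a ≤ b :=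
  Sigma.lex_iff

theorem Fin.snoc_eq_elim'_comp_finSuccEquivLast {α : Type*} {n : ℕ} (x : Fin n → α) (c : α) :
    Fin.snoc x c = Option.elim' c x ∘ finSuccEquivLast := by
  ext i
  induction i using Fin.lastCases <;> simp

theorem Option.elim'_comp_map {α β γ : Type*} (b : γ) (f : α → γ) (g : β → α) :
    Option.elim' b f ∘ Option.map g = Option.elim' b (f ∘ g) := by
  ext o
  cases o <;> rfl

namespace FirstOrder.Language.BoundedFormula

variable {α : Type*} {n : ℕ} (φ ψ : Language.order.BoundedFormula α n)

@[simp] theorem qr_not : qr φ.not = qr φ := by simp [qr]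

@[simp] theorem qr_inf : qr (φ ⊓ ψ) = max (qr φ) (qr ψ) := by simp [min, qr]

@[simp] theorem qr_sup : qr (φ ⊔ ψ) = max (qr φ) (qr ψ) := by
  rw [show φ ⊔ ψ = φ.not.imp ψ from rfl, qr, qr_not]

@[simp] theorem qr_top : qr (⊤ : Language.order.BoundedFormula α n) = 0 := by simp [qr]

@[simp] theorem qr_ex (φ : Language.order.BoundedFormula α (n + 1)) : qr φ.ex = qr φ + 1 := by
  simp [qr]

theorem qr_foldr_inf_le {m : ℕ} {l : List (Language.order.BoundedFormula α n)}
    (h : ∀ φ ∈ l, qr φ ≤ m) : qr (l.foldr (· ⊓ ·) ⊤) ≤ m := by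
  induction l with
  | nil => simp
  | cons φ l ih => simpa using ⟨h φ (by simp), ih fun ψ hψ => h ψ (by simp [hψ])⟩

theorem qr_foldr_sup_le {m : ℕ} {l : List (Language.order.BoundedFormula α n)}
    (h : ∀ φ ∈ l, qr φ ≤ m) : qr (l.foldr (· ⊔ ·) ⊥) ≤ m := by
  induction l with
  | nil => exact Nat.zero_le m
  | cons φ l ih => simpa using ⟨h φ (by simp), ih fun ψ hψ => h ψ (by simp [hψ])⟩

theorem qr_iInf_le {β : Type*} [Finite β] {f : β → Language.order.BoundedFormula α n} {m : ℕ}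
    (h : ∀ b, qr (f b) ≤ m) : qr (iInf f) ≤ m :=
  qr_foldr_inf_le (by simpa using h)

theorem qr_iSup_le {β : Type*} [Finite β] {f : β → Language.order.BoundedFormula α n} {m : ℕ}
    (h : ∀ b, qr (f b) ≤ m) : qr (iSup f) ≤ m :=
  qr_foldr_sup_le (by simpa using h)

end FirstOrder.Language.BoundedFormula

namespace EhrenfeuchtFraisse

open BoundedFormula

variable {M N : Type*} [LinearOrder M] [LinearOrder N]

section Game

variable {α β : Type}

def SameOrderType (x : α → M) (y : α → N) : Prop :=
  ∀ a b, x a ≤ x b ↔ y a ≤ y b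

theorem SameOrderType.refl (x : α → M) : SameOrderType x x := fun _ _ => Iff.rfl

theorem SameOrderType.symm {x : α → M} {y : α → N} (h : SameOrderType x y) :
    SameOrderType y x := fun a b => (h a b).symm

theorem SameOrderType.comp {x : α → M} {y : α → N} (h : SameOrderType x y) (f : β → α) :
    SameOrderType (x ∘ f) (y ∘ f) := fun a b => h (f a) (f b)

theorem SameOrderType.eq_iff {x : α → M} {y : α → N} (h : SameOrderType x y) (a b : α) :
    x a = x b ↔ y a = y b := by
  rw [le_antisymm_iff, le_antisymm_iff, h a b, h b a]

/-- Duplicator has a winning strategy in the `m`-round Ehrenfeucht–Fraïssé game on `M` and `N`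
started from the position `(x, y)`; `Option.elim' c x` is the position after the move `c`. -/
def EFEquiv : ℕ → ∀ {α : Type}, (α → M) → (α → N) → Prop
  | 0, _, x, y => SameOrderType x y
  | m + 1, _, x, y => SameOrderType x y ∧
      (∀ c, ∃ d, EFEquiv m (Option.elim' c x) (Option.elim' d y)) ∧
      (∀ d, ∃ c, EFEquiv m (Option.elim' c x) (Option.elim' d y))

theorem EFEquiv.sameOrderType {m : ℕ} {x : α → M} {y : α → N} (h : EFEquiv m x y) :
    SameOrderType x y := by
  cases m with
  | zero => exact h
  | succ m => exact h.1

theorem EFEquiv.of_succ {m : ℕ} {x : α → M} {y : α → N} (h : EFEquiv (m + 1) x y) :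
    EFEquiv m x y := by
  induction m generalizing α with
  | zero => exact h.1
  | succ m ih =>
    refine ⟨h.1, fun c => ?_, fun d => ?_⟩
    · obtain ⟨d, hd⟩ := h.2.1 c
      exact ⟨d, ih hd⟩
    · obtain ⟨c, hc⟩ := h.2.2 d
      exact ⟨c, ih hc⟩

theorem EFEquiv.symm {m : ℕ} {x : α → M} {y : α → N} (h : EFEquiv m x y) : EFEquiv m y x := by
  induction m generalizing α with
  | zero => exact SameOrderType.symm h
  | succ m ih =>
    refine ⟨h.1.symm, fun d => ?_, fun c => ?_⟩
    · obtain ⟨c, hc⟩ := h.2.2 d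
      exact ⟨c, ih hc⟩
    · obtain ⟨d, hd⟩ := h.2.1 c
      exact ⟨d, ih hd⟩

theorem EFEquiv.comp {m : ℕ} {x : α → M} {y : α → N} (h : EFEquiv m x y) (f : β → α) :
    EFEquiv m (x ∘ f) (y ∘ f) := by
  induction m generalizing α β with
  | zero => exact SameOrderType.comp h f
  | succ m ih =>
    refine ⟨h.1.comp f, fun c => ?_, fun d => ?_⟩
    · obtain ⟨d, hd⟩ := h.2.1 c
      exact ⟨d, by simpa [Option.elim'_comp_map] using ih hd (Option.map f)⟩
    · obtain ⟨c, hc⟩ := h.2.2 d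
      exact ⟨c, by simpa [Option.elim'_comp_map] using ih hc (Option.map f)⟩

theorem efEquiv_snoc_iff {m n : ℕ} {x : Fin n → M} {y : Fin n → N} {c : M} {d : N} :
    EFEquiv m (Fin.snoc x c) (Fin.snoc y d) ↔ EFEquiv m (Option.elim' c x) (Option.elim' d y) := by
  simp only [Fin.snoc_eq_elim'_comp_finSuccEquivLast]
  refine ⟨fun h => ?_, fun h => h.comp _⟩
  simpa [Function.comp_assoc] using h.comp finSuccEquivLast.symm

end Game

theorem exists_eq_var {n : ℕ} (t : Language.order.Term (Empty ⊕ Fin n)) :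
    ∃ i, t = Term.var (Sum.inr i) := by
  rcases t with (e | i) | ⟨f, _⟩
  · exact e.elim
  · exact ⟨i, rfl⟩
  · exact isEmptyElim f

theorem realize_iff_of_efEquiv {n : ℕ} (φ : Language.order.BoundedFormula Empty n) {m : ℕ}
    (hφ : qr φ ≤ m) {x : Fin n → M} {y : Fin n → N} (h : EFEquiv m x y) :
    φ.Realize default x ↔ φ.Realize default y := by
  induction φ generalizing m with
  | falsum => exact Iff.rfl
  | equal t₁ t₂ =>
    obtain ⟨i, rfl⟩ := exists_eq_var t₁
    obtain ⟨j, rfl⟩ := exists_eq_var t₂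
    exact h.sameOrderType.eq_iff i j
  | rel R ts =>
    cases R
    obtain ⟨i, hi⟩ := exists_eq_var (ts 0)
    obtain ⟨j, hj⟩ := exists_eq_var (ts 1)
    change (ts 0).realize _ ≤ (ts 1).realize _ ↔ (ts 0).realize _ ≤ (ts 1).realize _
    rw [hi, hj]
    exact h.sameOrderType i j
  | imp φ ψ ihφ ihψ =>
    simp only [qr, max_le_iff] at hφ
    exact imp_congr (ihφ hφ.1 h) (ihψ hφ.2 h)
  | all φ ih =>
    cases m with
    | zero => exact absurd hφ (Nat.not_succ_le_zero _)
    | succ m =>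
      replace hφ : qr φ ≤ m := Nat.le_of_succ_le_succ hφ
      refine ⟨fun hx d => ?_, fun hy c => ?_⟩
      · obtain ⟨c, hc⟩ := h.2.2 d
        exact (ih hφ (efEquiv_snoc_iff.2 hc)).1 (hx c)
      · obtain ⟨d, hd⟩ := h.2.1 c
        exact (ih hφ (efEquiv_snoc_iff.2 hd)).2 (hy d)

/-- The `m`-types of `n`-tuples: the order diagram of the tuple together with, for `m > 0`, the
set of `(m - 1)`-types of its one-point extensions. -/
def RankType : ℕ → ℕ → Type
  | 0, n => Fin n → Fin n → Bool
  | m + 1, n => (Fin n → Fin n → Bool) × Set (RankType m (n + 1))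

instance RankType.finite : ∀ m n, Finite (RankType m n)
  | 0, _ => Pi.finite
  | m + 1, n => have := RankType.finite m (n + 1); inferInstanceAs (Finite (_ × Set _))

def orderDiagram {n : ℕ} (x : Fin n → M) : Fin n → Fin n → Bool :=
  fun i j => decide (x i ≤ x j)

noncomputable def rankType : ∀ (m : ℕ) {n : ℕ}, (Fin n → M) → RankType m n
  | 0, _, x => orderDiagram x
  | m + 1, _, x => (orderDiagram x, Set.range fun c => rankType m (Fin.snoc x c))

def leAtom {n : ℕ} (i j : Fin n) : Language.order.BoundedFormula Empty n :=
  Term.le (Term.var (Sum.inr i)) (Term.var (Sum.inr j))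

def leLiteral {n : ℕ} (b : Bool) (i j : Fin n) : Language.order.BoundedFormula Empty n :=
  if b then leAtom i j else (leAtom i j).not

noncomputable def diagramFormula {n : ℕ} (t : Fin n → Fin n → Bool) :
    Language.order.BoundedFormula Empty n :=
  iInf fun p : Fin n × Fin n => leLiteral (t p.1 p.2) p.1 p.2

noncomputable def hintikkaFormula :
    ∀ (m : ℕ) {n : ℕ}, RankType m n → Language.order.BoundedFormula Empty n
  | 0, _, t => diagramFormula t
  | m + 1, _, t => diagramFormula t.1 ⊓ (iInf fun s : t.2 => (hintikkaFormula m s).ex) ⊓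
      (iSup fun s : t.2 => hintikkaFormula m s).all

theorem qr_leLiteral {n : ℕ} (b : Bool) (i j : Fin n) : qr (leLiteral b i j) = 0 := by
  cases b <;> rfl

theorem qr_hintikkaFormula_le :
    ∀ (m : ℕ) {n : ℕ} (t : RankType m n), qr (hintikkaFormula m t) ≤ m
  | 0, _, _ => qr_iInf_le fun _ => (qr_leLiteral _ _ _).le
  | m + 1, _, t => by
    have hs (s : t.2) : qr (hintikkaFormula m s.1) ≤ m := qr_hintikkaFormula_le m s.1
    simp only [hintikkaFormula, qr_inf, qr, max_le_iff, Nat.add_le_add_iff_right]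
    exact ⟨⟨qr_iInf_le fun _ => by simp [qr_leLiteral], qr_iInf_le fun s => by simpa using hs s⟩,
      qr_iSup_le hs⟩

theorem realize_leLiteral {n : ℕ} (b : Bool) (i j : Fin n) (y : Fin n → N) :
    (leLiteral b i j).Realize default y ↔ (y i ≤ y j ↔ b) := by
  have : (leAtom i j).Realize default y ↔ y i ≤ y j := Iff.rfl
  cases b <;> simp [leLiteral, this]

theorem realize_diagramFormula_orderDiagram {n : ℕ} (x : Fin n → M) (y : Fin n → N) :
    (diagramFormula (orderDiagram x)).Realize default y ↔ SameOrderType x y := by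
  simp [diagramFormula, realize_leLiteral, orderDiagram, SameOrderType, iff_comm]

theorem realize_hintikkaFormula_rankType_succ {m n : ℕ} (x : Fin n → M) (y : Fin n → N) :
    (hintikkaFormula (m + 1) (rankType (m + 1) x)).Realize default y ↔ SameOrderType x y ∧
      (∀ c, ∃ d, (hintikkaFormula m (rankType m (Fin.snoc x c))).Realize default (Fin.snoc y d)) ∧
      (∀ d, ∃ c, (hintikkaFormula m (rankType m (Fin.snoc x c))).Realize default
        (Fin.snoc y d)) := by
  simp only [hintikkaFormula, realize_inf, realize_iInf, realize_ex, realize_all, realize_iSup]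
  simp [rankType, realize_diagramFormula_orderDiagram, and_assoc]

theorem realize_hintikkaFormula_rankType : ∀ (m : ℕ) {n : ℕ} (x : Fin n → M),
    (hintikkaFormula m (rankType m x)).Realize default x
  | 0, _, x => (realize_diagramFormula_orderDiagram x x).2 (.refl x)
  | m + 1, _, x => (realize_hintikkaFormula_rankType_succ x x).2
      ⟨.refl x, fun c => ⟨c, realize_hintikkaFormula_rankType m _⟩,
        fun d => ⟨d, realize_hintikkaFormula_rankType m _⟩⟩

theorem efEquiv_of_realize_hintikkaFormula_rankType :
    ∀ (m : ℕ) {n : ℕ} (x : Fin n → M) (y : Fin n → N),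
    (hintikkaFormula m (rankType m x)).Realize default y → EFEquiv m x y
  | 0, _, x, y, h => (realize_diagramFormula_orderDiagram x y).1 h
  | m + 1, _, x, y, h => by
    obtain ⟨hxy, hforth, hback⟩ := (realize_hintikkaFormula_rankType_succ x y).1 h
    refine ⟨hxy, fun c => ?_, fun d => ?_⟩
    · obtain ⟨d, hd⟩ := hforth c
      exact ⟨d, efEquiv_snoc_iff.1 (efEquiv_of_realize_hintikkaFormula_rankType m _ _ hd)⟩
    · obtain ⟨c, hc⟩ := hback d
      exact ⟨c, efEquiv_snoc_iff.1 (efEquiv_of_realize_hintikkaFormula_rankType m _ _ hc)⟩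

theorem eqRk_iff_efEquiv {k : ℕ} :
    EqRk k M N ↔ EFEquiv k (default : Fin 0 → M) (default : Fin 0 → N) := by
  refine ⟨fun h => efEquiv_of_realize_hintikkaFormula_rankType k _ _ ?_, fun h φ hφ => ?_⟩
  · exact (h _ (qr_hintikkaFormula_le k _)).1 (realize_hintikkaFormula_rankType k default)
  · exact realize_iff_of_efEquiv φ hφ h

section Sum

variable {I : Type*} {L L' : I → Type*}
  [∀ i, LinearOrder (L i)] [∀ i, LinearOrder (L' i)] {α : Type}

/-- The invariant of Duplicator's summandwise strategy on the ordered sums: `f a` is the summand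
holding the coordinate `a` of both positions. -/
def SummandwiseEFEquiv (m : ℕ) (f : α → I) (x : α → Σₗ i, L i) (y : α → Σₗ i, L' i) : Prop :=
  ∀ i, ∃ (u : {a // f a = i} → L i) (v : {a // f a = i} → L' i),
    (∀ p, x p.1 = toLex ⟨i, u p⟩) ∧ (∀ p, y p.1 = toLex ⟨i, v p⟩) ∧ EFEquiv m u v

namespace SummandwiseEFEquiv

variable {m : ℕ} {f : α → I} {x : α → Σₗ i, L i} {y : α → Σₗ i, L' i}

theorem symm (h : SummandwiseEFEquiv m f x y) : SummandwiseEFEquiv m f y x := fun i =>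
  let ⟨u, v, hu, hv, huv⟩ := h i
  ⟨v, u, hv, hu, huv.symm⟩

theorem of_succ (h : SummandwiseEFEquiv (m + 1) f x y) : SummandwiseEFEquiv m f x y := fun i =>
  let ⟨u, v, hu, hv, huv⟩ := h i
  ⟨u, v, hu, hv, huv.of_succ⟩

theorem sameOrderType [LinearOrder I] (h : SummandwiseEFEquiv m f x y) : SameOrderType x y := by
  intro a b
  obtain ⟨u, v, hu, hv, -⟩ := h (f a)
  obtain ⟨u', v', hu', hv', huv'⟩ := h (f b)
  rcases lt_trichotomy (f a) (f b) with hab | hab | hab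
  · simp [hu ⟨a, rfl⟩, hv ⟨a, rfl⟩, hu' ⟨b, rfl⟩, hv' ⟨b, rfl⟩, Sigma.Lex.toLex_mk_le_toLex_mk, hab]
  · simpa [hu' ⟨a, hab⟩, hv' ⟨a, hab⟩, hu' ⟨b, rfl⟩, hv' ⟨b, rfl⟩, Sigma.Lex.toLex_mk_le_toLex_mk]
      using huv'.sameOrderType ⟨a, hab⟩ ⟨b, rfl⟩
  · simp [hu ⟨a, rfl⟩, hv ⟨a, rfl⟩, hu' ⟨b, rfl⟩, hv' ⟨b, rfl⟩, Sigma.Lex.toLex_mk_le_toLex_mk,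
      hab.not_gt, hab.ne']

theorem extend (h : SummandwiseEFEquiv m f x y) {i : I} {u : {a // f a = i} → L i}
    {v : {a // f a = i} → L' i} (hu : ∀ p, x p.1 = toLex ⟨i, u p⟩)
    (hv : ∀ p, y p.1 = toLex ⟨i, v p⟩) {c : L i} {d : L' i}
    (hcd : EFEquiv m (Option.elim' c u) (Option.elim' d v)) :
    SummandwiseEFEquiv m (Option.elim' i f) (Option.elim' (toLex ⟨i, c⟩) x)
      (Option.elim' (toLex ⟨i, d⟩) y) := by
  intro j
  by_cases hji : j = i
  · subst hji
    let g : {o // Option.elim' j f o = j} → Option {a // f a = j}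
      | ⟨none, _⟩ => none
      | ⟨some a, ha⟩ => some ⟨a, ha⟩
    refine ⟨Option.elim' c u ∘ g, Option.elim' d v ∘ g, ?_, ?_, hcd.comp g⟩
    · rintro ⟨_ | a, ha⟩
      exacts [rfl, hu ⟨a, ha⟩]
    · rintro ⟨_ | a, ha⟩
      exacts [rfl, hv ⟨a, ha⟩]
  · obtain ⟨u', v', hu', hv', huv'⟩ := h j
    let g : {o // Option.elim' i f o = j} → {a // f a = j}
      | ⟨none, hij⟩ => (hji hij.symm).elim
      | ⟨some a, ha⟩ => ⟨a, ha⟩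
    refine ⟨u' ∘ g, v' ∘ g, ?_, ?_, huv'.comp g⟩
    · rintro ⟨_ | a, ha⟩
      exacts [(hji ha.symm).elim, hu' ⟨a, ha⟩]
    · rintro ⟨_ | a, ha⟩
      exacts [(hji ha.symm).elim, hv' ⟨a, ha⟩]

theorem forth (h : SummandwiseEFEquiv (m + 1) f x y) (c : Σₗ i, L i) :
    ∃ d f', SummandwiseEFEquiv m f' (Option.elim' c x) (Option.elim' d y) := by
  obtain ⟨i, c⟩ := c
  obtain ⟨u, v, hu, hv, huv⟩ := h i
  obtain ⟨d, hcd⟩ := huv.2.1 c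
  exact ⟨toLex ⟨i, d⟩, _, h.of_succ.extend hu hv hcd⟩

end SummandwiseEFEquiv

theorem efEquiv_of_summandwiseEFEquiv [LinearOrder I] {m : ℕ} {f : α → I} {x : α → Σₗ i, L i}
    {y : α → Σₗ i, L' i} (h : SummandwiseEFEquiv m f x y) : EFEquiv m x y := by
  induction m generalizing α with
  | zero => exact h.sameOrderType
  | succ m ih =>
    refine ⟨h.sameOrderType, fun c => ?_, fun d => ?_⟩
    · obtain ⟨d, f', h'⟩ := h.forth c
      exact ⟨d, ih h'⟩
    · obtain ⟨c, f', h'⟩ := h.symm.forth d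
      exact ⟨c, ih h'.symm⟩

end Sum

end EhrenfeuchtFraisse

/-- If `I` is a linear order and for each `i ∈ I` the linear orders
`L i` and `L' i` satisfy `L i ≡ₖ L' i`, then the ordered sums satisfy
`∑_{i∈I} L i ≡ₖ ∑_{i∈I} L' i`. -/
theorem eqRk_sigma_lex {k : ℕ} {I : Type*} [LinearOrder I]
    (L L' : I → Type*) [∀ i, LinearOrder (L i)] [∀ i, LinearOrder (L' i)]
    (h : ∀ i, EqRk k (L i) (L' i)) :
    EqRk k (Σₗ i, L i) (Σₗ i, L' i) := by
  rw [EhrenfeuchtFraisse.eqRk_iff_efEquiv]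
  refine EhrenfeuchtFraisse.efEquiv_of_summandwiseEFEquiv (f := (default : Fin 0 → I)) fun i => ?_
  exact ⟨default, default, fun p => p.1.elim0, fun p => p.1.elim0,
    (EhrenfeuchtFraisse.eqRk_iff_efEquiv.1 (h i)).comp Subtype.val⟩
end

section
/- The first-order theory of ⟨ω,<⟩ is finitely axiomatized by the linear order axioms plus: a least element exists, every element has an immediate successor, and every non-minimal element has an immediate predecessor. That is, every linear order satisfying these axioms is elementarily equivalent to ⟨ω,<⟩. -/
open FirstOrder Language Ordinal

attribute [local instance] FirstOrder.Language.orderStructure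

/-!
A linear order with a least element in which every element has an immediate successor and every
non-minimal element an immediate predecessor is `ω` followed by copies of `ℤ`, like ℕ itself.
Any two such orders are elementarily equivalent by an Ehrenfeucht–Fraïssé argument. Call two
tuples, both extended by the least element, `k`-equivalent when they have the same order type and
the same successor distances, all distances `≥ 2 ^ k` being identified. Such tuples satisfy the
same formulas of quantifier rank `k`: a new point `x` on one side is answered by a point `y` at
the same truncated distances from the nearest tuple points below and above, which exists because
two distances that agree after truncation at `2 ^ (k + 1)` split into two parts in the same ways
after truncation at `2 ^ k`.
-/

open Function

namespace ENat

theorem min_add_min_add_min (a b c : ℕ∞) : min (min a c + min b c) c = min (a + b) c := by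
  rcases le_total a c with ha | ha <;> rcases le_total b c with hb | hb <;>
    simp [ha, hb, le_add_right, le_add_left]

theorem min_add_congr {a b a' b' c : ℕ∞} (ha : min a c = min a' c) (hb : min b c = min b' c) :
    min (a + b) c = min (a' + b') c := by
  rw [← min_add_min_add_min, ha, hb, min_add_min_add_min]

theorem exists_add_eq_of_min_add_eq {a b d c : ℕ∞} (hc : c ≠ ⊤)
    (h : min (a + b) (c + c) = min d (c + c)) :
    ∃ a' b', a' + b' = d ∧ min a' c = min a c ∧ min b' c = min b c ∧
      (a' ≠ ⊤ ∨ b' ≠ ⊤) := by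
  lift c to ℕ using hc
  have hmin (m n : ℕ) : min (m : ℕ∞) n = (min m n : ℕ) := Nat.mono_cast.map_min.symm
  -- keep whichever of `a`, `b` is below `c`; if neither is, both new parts are `≥ c`
  refine if ha : a < c then ⟨a, d - a, ?_⟩ else if hb : b < c then ⟨d - b, b, ?_⟩
    else ⟨c, d - c, ?_⟩ <;>
  induction a using ENat.recTopCoe <;> induction b using ENat.recTopCoe <;>
    induction d using ENat.recTopCoe <;> simp_all <;> norm_cast at * <;>
    simp only [hmin, Nat.cast_inj] at * <;> omega

end ENat

namespace Order

section SuccDist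

variable {α : Type*} [LinearOrder α] [SuccOrder α] {x y z : α} {n : ℕ}

theorem exists_succ_iterate_eq_of_le_of_le_succ_iterate (hxy : x ≤ y) (hy : y ≤ succ^[n] x) :
    ∃ m ≤ n, succ^[m] x = y := by
  induction n with
  | zero => exact ⟨0, le_rfl, le_antisymm hxy hy⟩
  | succ n ih =>
    rw [iterate_succ_apply'] at hy
    rcases le_succ_iff_eq_or_le.1 hy with rfl | hy
    · exact ⟨n + 1, le_rfl, iterate_succ_apply' ..⟩
    · obtain ⟨m, hm, rfl⟩ := ih hy
      exact ⟨m, hm.trans n.le_succ, rfl⟩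

/-- The number of successor steps from `x` to `y`; it is `⊤` when `y` is never reached, in
particular when `y < x`. -/
noncomputable def succDist (x y : α) : ℕ∞ :=
  ⨅ (n : ℕ) (_ : succ^[n] x = y), (n : ℕ∞)

theorem succDist_eq_top (h : ∀ n, succ^[n] x ≠ y) : succDist x y = ⊤ := by
  simp [succDist, h]

variable [NoMaxOrder α]

theorem strictMono_succ_iterate (x : α) : StrictMono (succ^[·] x) :=
  strictMono_nat_of_lt_succ fun n => by
    simpa only [iterate_succ_apply'] using lt_succ (succ^[n] x)

theorem succDist_succ_iterate (x : α) (n : ℕ) : succDist x (succ^[n] x) = n :=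
  le_antisymm (iInf_le_of_le n (iInf_le _ rfl)) <| le_iInf₂ fun _ hm =>
    Nat.cast_le.2 ((strictMono_succ_iterate x).injective hm).ge

@[simp]
theorem succDist_eq_zero : succDist x y = 0 ↔ x = y := by
  refine ⟨fun h => ?_, fun h => h ▸ succDist_succ_iterate x 0⟩
  by_cases hy : ∃ n, succ^[n] x = y
  · obtain ⟨n, rfl⟩ := hy
    rw [succDist_succ_iterate, Nat.cast_eq_zero] at h
    rw [h, iterate_zero_apply]
  · simp [succDist_eq_top (not_exists.1 hy)] at h

@[simp]
theorem succDist_self (x : α) : succDist x x = 0 :=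
  succDist_eq_zero.2 rfl

theorem succDist_add (hxy : x ≤ y) (hyz : y ≤ z) :
    succDist x y + succDist y z = succDist x z := by
  by_cases hy : ∃ m, succ^[m] x = y
  · obtain ⟨m, rfl⟩ := hy
    by_cases hz : ∃ n, succ^[n] (succ^[m] x) = z
    · obtain ⟨n, rfl⟩ := hz
      rw [succDist_succ_iterate x m, succDist_succ_iterate _ n, ← iterate_add_apply,
        succDist_succ_iterate, add_comm, Nat.cast_add]
    · rw [succDist_eq_top (not_exists.1 hz), add_top, eq_comm, succDist_eq_top]
      rintro n rfl
      have hmn : m ≤ n := (strictMono_succ_iterate x).le_iff_le.1 hyz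
      exact hz ⟨n - m, by rw [← iterate_add_apply, Nat.sub_add_cancel hmn]⟩
  · rw [succDist_eq_top (not_exists.1 hy), top_add, eq_comm, succDist_eq_top]
    rintro n rfl
    obtain ⟨m, -, hm⟩ := exists_succ_iterate_eq_of_le_of_le_succ_iterate hxy hyz
    exact hy ⟨m, hm⟩

theorem succ_iterate_le_of_le_succDist (hxy : x ≤ y) (hn : (n : ℕ∞) ≤ succDist x y) :
    succ^[n] x ≤ y := by
  by_contra! hlt
  obtain ⟨m, hmn, rfl⟩ := exists_succ_iterate_eq_of_le_of_le_succ_iterate hxy hlt.le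
  rw [succDist_succ_iterate, Nat.cast_le] at hn
  exact hlt.ne (by rw [le_antisymm hmn hn])

theorem exists_le_succ_iterate_eq [PredOrder α] (h : succ^[n] x ≤ y) :
    ∃ z, x ≤ z ∧ succ^[n] z = y := by
  induction n generalizing y with
  | zero => exact ⟨y, h, rfl⟩
  | succ n ih =>
    have hlt : succ^[n] x < y := (strictMono_succ_iterate x n.lt_succ_self).trans_le h
    obtain ⟨z, hxz, hz⟩ := ih (le_pred_of_lt hlt)
    refine ⟨z, hxz, ?_⟩
    rw [iterate_succ_apply', hz, succ_pred_of_not_isMin (not_isMin_of_lt hlt)]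

theorem exists_succDist_eq_add [PredOrder α] {a b : ℕ∞} (hxz : x ≤ z)
    (hab : a + b = succDist x z) (hfin : a ≠ ⊤ ∨ b ≠ ⊤) :
    ∃ y, x ≤ y ∧ y ≤ z ∧ succDist x y = a ∧ succDist y z = b := by
  rcases hfin with ha | hb
  · lift a to ℕ using ha
    have hyz : succ^[a] x ≤ z := succ_iterate_le_of_le_succDist hxz (hab ▸ le_self_add)
    refine ⟨succ^[a] x, le_succ_iterate a x, hyz, succDist_succ_iterate x a, ?_⟩
    rw [← succDist_add (le_succ_iterate a x) hyz, succDist_succ_iterate] at hab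
    exact (WithTop.add_left_cancel (ENat.natCast_ne_top a) hab).symm
  · lift b to ℕ using hb
    obtain ⟨y, hxy, rfl⟩ := exists_le_succ_iterate_eq <|
      succ_iterate_le_of_le_succDist hxz (hab ▸ le_add_self)
    refine ⟨y, hxy, le_succ_iterate b y, ?_, succDist_succ_iterate y b⟩
    rw [← succDist_add hxy (le_succ_iterate b y), succDist_succ_iterate] at hab
    exact (WithTop.add_right_cancel (ENat.natCast_ne_top b) hab).symm

end SuccDist

section BackAndForth

variable {α β : Type*} [LinearOrder α] [SuccOrder α] [LinearOrder β] [SuccOrder β]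
  {k n : ℕ} {v : Fin n → α} {w : Fin n → β}

/-- Distances below `2 ^ k` are exactly those that `k` rounds of the Ehrenfeucht–Fraïssé game
can tell apart. -/
def TruncDistEquiv (k : ℕ) {n : ℕ} (v : Fin n → α) (w : Fin n → β) : Prop :=
  ∀ i j, v i ≤ v j →
    w i ≤ w j ∧ min (succDist (v i) (v j)) (2 ^ k) = min (succDist (w i) (w j)) (2 ^ k)

namespace TruncDistEquiv

theorem mono (h : TruncDistEquiv k v w) {k' : ℕ} (hk : k' ≤ k) : TruncDistEquiv k' v w := by
  have trunc (d : ℕ∞) : min d (2 ^ k') = min (min d (2 ^ k)) (2 ^ k') := by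
    rw [min_assoc, min_eq_right (pow_le_pow_right₀ one_le_two hk)]
  exact fun i j hv => ⟨(h i j hv).1, by rw [trunc, (h i j hv).2, ← trunc]⟩

end TruncDistEquiv

variable [NoMaxOrder α] [NoMaxOrder β]

theorem min_succDist_pow_eq_zero {x y : α} : min (succDist x y) (2 ^ k) = 0 ↔ x = y := by
  simp [min_eq_zero]

namespace TruncDistEquiv

theorem le_iff (h : TruncDistEquiv k v w) (i j : Fin n) : v i ≤ v j ↔ w i ≤ w j := by
  refine ⟨fun hv => (h i j hv).1, fun hw => ?_⟩
  by_contra! hv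
  obtain ⟨hw', hd⟩ := h j i hv.le
  exact hv.ne (min_succDist_pow_eq_zero.1 (hd.trans
    (min_succDist_pow_eq_zero.2 (le_antisymm hw' hw))))

theorem symm (h : TruncDistEquiv k v w) : TruncDistEquiv k w v := fun i j hw =>
  have hv := (h.le_iff i j).2 hw
  ⟨hv, (h i j hv).2.symm⟩

theorem snoc (h : TruncDistEquiv k v w) {x : α} {y : β}
    (hlow : ∀ t, v t ≤ x →
      w t ≤ y ∧ min (succDist (v t) x) (2 ^ k) = min (succDist (w t) y) (2 ^ k))
    (hhigh : ∀ t, x < v t →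
      y ≤ w t ∧ min (succDist x (v t)) (2 ^ k) = min (succDist y (w t)) (2 ^ k)) :
    TruncDistEquiv k (Fin.snoc v x) (Fin.snoc w y) := by
  intro i j hij
  induction i using Fin.lastCases <;> induction j using Fin.lastCases <;>
    simp only [Fin.snoc_last, Fin.snoc_castSucc] at hij ⊢
  case last.last => simp
  case last.cast j =>
    rcases hij.eq_or_lt with rfl | hlt
    · obtain ⟨hw, hd⟩ := hlow j le_rfl
      obtain rfl := min_succDist_pow_eq_zero.1 (hd.symm.trans (min_succDist_pow_eq_zero.2 rfl))
      exact ⟨le_rfl, hd⟩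
    · exact hhigh j hlt
  case cast.last i => exact hlow i hij
  case cast.cast i j => exact h i j hij

theorem exists_snoc [OrderBot α] [PredOrder β] (h : TruncDistEquiv (k + 1) v w) {o : Fin n}
    (ho : v o = ⊥) (x : α) : ∃ y, TruncDistEquiv k (Fin.snoc v x) (Fin.snoc w y) := by
  classical
  have hk := h.mono k.le_succ
  obtain ⟨i, hix, hi⟩ : ∃ i, v i ≤ x ∧ ∀ t, v t ≤ x → v t ≤ v i := by
    simpa using Finset.exists_max_image {t | v t ≤ x} v ⟨o, by simp [ho]⟩
  have low (y : β) (hiy : w i ≤ y)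
      (hd : min (succDist (v i) x) (2 ^ k) = min (succDist (w i) y) (2 ^ k)) (t : Fin n)
      (ht : v t ≤ x) :
      w t ≤ y ∧ min (succDist (v t) x) (2 ^ k) = min (succDist (w t) y) (2 ^ k) := by
    obtain ⟨hti, hdt⟩ := hk t i (hi t ht)
    refine ⟨hti.trans hiy, ?_⟩
    rw [← succDist_add (hi t ht) hix, ← succDist_add hti hiy]
    exact ENat.min_add_congr hdt hd
  -- `y` is placed relative to the partners of the nearest tuple points below and (if any)
  -- above `x`
  by_cases hup : ∃ j, x < v j
  · obtain ⟨j, hxj, hj⟩ : ∃ j, x < v j ∧ ∀ t, x < v t → v j ≤ v t := by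
      obtain ⟨j, hj⟩ := hup
      simpa using Finset.exists_min_image {t | x < v t} v ⟨j, by simpa using hj⟩
    obtain ⟨hij, hd⟩ := h i j (hix.trans hxj.le)
    rw [← succDist_add hix hxj.le, pow_succ, mul_two] at hd
    obtain ⟨a, b, hab, ha, hb, hfin⟩ := ENat.exists_add_eq_of_min_add_eq (by simp) hd
    obtain ⟨y, hiy, hyj, rfl, rfl⟩ := exists_succDist_eq_add hij hab hfin
    refine ⟨y, hk.snoc (low y hiy ha.symm) fun t ht => ?_⟩
    obtain ⟨hjt, hdt⟩ := hk j t (hj t ht)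
    refine ⟨hyj.trans hjt, ?_⟩
    rw [← succDist_add hxj.le (hj t ht), ← succDist_add hyj hjt]
    exact ENat.min_add_congr hb.symm hdt
  · push Not at hup
    obtain ⟨a, ha⟩ : ∃ a : ℕ, (a : ℕ∞) = min (succDist (v i) x) (2 ^ k) :=
      ⟨_, ENat.natCast_toNat (by simp)⟩
    refine ⟨succ^[a] (w i), hk.snoc (low _ (le_succ_iterate a (w i)) ?_) fun t ht =>
      absurd (hup t) ht.not_ge⟩
    rw [succDist_succ_iterate, ha, min_assoc, min_self]

end TruncDistEquiv

end BackAndForth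

end Order

namespace FirstOrder.Language

theorem order.term_eq_var {n : ℕ} (t : Language.order.Term (Empty ⊕ Fin n)) :
    ∃ i, t = Term.var (Sum.inr i) := by
  rcases t with (⟨⟨⟩⟩ | i) | ⟨⟨⟩, _⟩
  exact ⟨i, rfl⟩

theorem order.realize_iff_of_forth_back {M N : Type*} [PartialOrder M] [PartialOrder N]
    (R : ℕ → ∀ n, (Fin n → M) → (Fin n → N) → Prop)
    (le_iff : ∀ {k n v w}, R k n v w → ∀ i j, v i ≤ v j ↔ w i ≤ w j)
    (forth : ∀ {k n v w}, R (k + 1) n v w →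
      ∀ x, ∃ y, R k (n + 1) (Fin.snoc v x) (Fin.snoc w y))
    (back : ∀ {k n v w}, R (k + 1) n v w →
      ∀ y, ∃ x, R k (n + 1) (Fin.snoc v x) (Fin.snoc w y))
    {n : ℕ} (φ : Language.order.BoundedFormula Empty n) {k : ℕ} (hφ : qr φ ≤ k)
    {v : Fin n → M} {w : Fin n → N} (h : R k n v w) :
    φ.Realize default v ↔ φ.Realize default w := by
  induction φ generalizing k with
  | falsum => rfl
  | equal t₁ t₂ =>
    obtain ⟨i, rfl⟩ := order.term_eq_var t₁
    obtain ⟨j, rfl⟩ := order.term_eq_var t₂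
    simp only [BoundedFormula.Realize, Term.realize_var, Sum.elim_inr, le_antisymm_iff, le_iff h]
  | rel R ts =>
    cases R
    obtain ⟨i, hi⟩ := order.term_eq_var (ts 0)
    obtain ⟨j, hj⟩ := order.term_eq_var (ts 1)
    show (ts 0).realize _ ≤ (ts 1).realize _ ↔ (ts 0).realize _ ≤ (ts 1).realize _
    simp only [hi, hj, Term.realize_var, Sum.elim_inr, le_iff h]
  | imp f g ihf ihg =>
    simp only [qr, sup_le_iff] at hφ
    simp only [BoundedFormula.realize_imp, ihf hφ.1 h, ihg hφ.2 h]
  | all f ih =>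
    cases k with
    | zero => exact absurd hφ (Nat.not_succ_le_zero _)
    | succ k =>
      simp only [BoundedFormula.realize_all]
      refine ⟨fun hv y => ?_, fun hw x => ?_⟩
      · obtain ⟨x, hxy⟩ := back h y
        exact (ih (Nat.le_of_succ_le_succ hφ) hxy).1 (hv x)
      · obtain ⟨y, hxy⟩ := forth h x
        exact (ih (Nat.le_of_succ_le_succ hφ) hxy).2 (hw y)

open Order in
theorem order.elementarilyEquivalent_of_succOrder_predOrder {α β : Type*}
    [LinearOrder α] [SuccOrder α] [PredOrder α] [OrderBot α] [NoMaxOrder α]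
    [LinearOrder β] [SuccOrder β] [PredOrder β] [OrderBot β] [NoMaxOrder β] :
    α ≅[Language.order] β := by
  refine elementarilyEquivalent_iff.2 fun φ => order.realize_iff_of_forth_back
    (fun k n v w => TruncDistEquiv k (Fin.cons ⊥ v) (Fin.cons ⊥ w)) ?_ ?_ ?_ φ le_rfl ?_
  · intro k n v w h i j
    simpa using h.le_iff i.succ j.succ
  · intro k n v w h x
    simp only [Fin.cons_snoc_eq_snoc_cons]
    exact h.exists_snoc (o := 0) rfl x
  · intro k n v w h y
    simp only [Fin.cons_snoc_eq_snoc_cons]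
    obtain ⟨x, hx⟩ := h.symm.exists_snoc (o := 0) rfl y
    exact ⟨x, hx.symm⟩
  · intro i j _
    obtain rfl := Subsingleton.elim (α := Fin 1) i j
    simp

end FirstOrder.Language

/-- Every linear order with a least element, in which every element has an
immediate successor and every non-minimal element has an immediate predecessor, is
elementarily equivalent to `⟨ω,<⟩`. -/
theorem finite_axiomatization_of_omega (L : Type*) [LinearOrder L]
    (hmin : ∃ m : L, ∀ x, m ≤ x)
    (hsucc : ∀ x : L, ∃ y, x < y ∧ ∀ z, x < z → y ≤ z)
    (hpred : ∀ x : L, (∃ z, z < x) → ∃ y, y < x ∧ ∀ z, z < x → z ≤ y) :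
    L ≅[Language.order] ℕ := by
  classical
  obtain ⟨m, hm⟩ := hmin
  choose S hS_lt hS_le using hsucc
  choose! P hP_lt hP_le using hpred
  let : OrderBot L := { bot := m, bot_le := hm }
  let : SuccOrder L := SuccOrder.ofSuccLeIff S fun {a b} => ⟨(hS_lt a).trans_le, hS_le a b⟩
  let : PredOrder L := PredOrder.ofCore (fun x => if IsMin x then x else P x)
    (fun {a} ha b => by
      rw [if_neg ha]
      have ha := not_isMin_iff.1 ha
      exact ⟨hP_le a ha b, fun hb => hb.trans_lt (hP_lt a ha)⟩)
    (fun _ ha => if_pos ha)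
  have : NoMaxOrder L := ⟨fun x => ⟨S x, hS_lt x⟩⟩
  exact order.elementarilyEquivalent_of_succOrder_predOrder
end
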